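/- Let 𝕋 = ℝ/ℤ be the circle group with its usual topology and let ℋ be the family of all subgroups of 𝕋^ℕ (with the product topology) that are weakly controllable in 𝕋^ℕ but not controllable in 𝕋^ℕ. Then ℋ has cardinality 2^𝔠, where 𝔠 is the cardinality of the continuum. -/

import Mathlib

/-- Projection of an element of the direct product `ℕ → M` to the coordinates
in `J`. -/
def proj {M : Type*} (J : Set ℕ) (g : ℕ → M) : J → M :=
  fun j => g j

/-- A subgroup `H` of the direct product `G = M^ℕ` is *controllable* in `G` if
`p_J(H) = p_J(H ∩ ⊕_{n ∈ ℕ} M)` for every finite `J ⊆ ℕ`. -/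
def Controllable {M : Type*} [AddCommGroup M] (H : AddSubgroup (ℕ → M)) : Prop :=
  ∀ J : Set ℕ, J.Finite →
    proj J '' (H : Set (ℕ → M)) =
      proj J '' ((H : Set (ℕ → M)) ∩ {g | {n | g n ≠ 0}.Finite})

/-- A subgroup `H` of the direct product `G = M^ℕ` of a topological abelian
group is *weakly controllable* in `G` if `H ∩ ⊕_{n ∈ ℕ} M` is dense in `H`
(with respect to the Tychonoff product topology). -/
def WeaklyControllable {M : Type*} [AddCommGroup M] [TopologicalSpace M]
    (H : AddSubgroup (ℕ → M)) : Prop :=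
  (H : Set (ℕ → M)) ⊆ closure ((H : Set (ℕ → M)) ∩ {g | {n | g n ≠ 0}.Finite})

/-!
Let `Q = ℚ/ℤ ⊆ 𝕋` and let `D` be the group of finitely supported `Q`-valued sequences; `D` is
dense in `𝕋^ℕ`. For a subgroup `W ≤ 𝕋` put `H_W = D + Δ(W)`, `Δ` the diagonal embedding. A nonzero
constant sequence is not finitely supported, so `H_W ∩ ⊕ 𝕋 = D`: hence `H_W` is weakly
controllable, `W = Δ⁻¹(H_W)` is recovered from `H_W`, and `H_W` is not controllable once `W ⊄ Q`,
since the `0`-th coordinate of `Δ(w)`, `w ∉ Q`, is not that of any element of `D`. If `B` is a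
Hamel basis of `ℝ` over `ℚ` containing `1`, the groups `W_S = span_ℚ (S ∪ {1}) / ℤ` for nonempty
`S ⊆ B \ {1}` are pairwise distinct and not contained in `Q`, giving `2^𝔠` such subgroups; and
`𝕋^ℕ` has only `2^𝔠` subgroups in all.
-/

open Cardinal Set Function Filter Topology

noncomputable section

section FiniteSupport

variable (M : Type*) [AddCommGroup M]

def finiteSupport : AddSubgroup (ℕ → M) where
  carrier := {g | g.support.Finite}
  zero_mem' := by simp
  add_mem' hg hh := (hg.union hh).subset (support_add _ _)
  neg_mem' hg := by rwa [mem_ofPred_eq, support_neg]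

variable {M}

lemma const_mem_finiteSupport_iff {c : M} : (fun _ : ℕ => c) ∈ finiteSupport M ↔ c = 0 := by
  refine ⟨fun h => ?_, fun h => h ▸ zero_mem (finiteSupport M)⟩
  by_contra hc
  exact infinite_univ (support_const hc ▸ h : (univ : Set ℕ).Finite)

def supConst (D : AddSubgroup (ℕ → M)) (W : AddSubgroup M) : AddSubgroup (ℕ → M) :=
  D ⊔ W.map (Pi.constAddMonoidHom ℕ M)

variable {D : AddSubgroup (ℕ → M)} {W : AddSubgroup M}

lemma mem_supConst_iff {g : ℕ → M} :
    g ∈ supConst D W ↔ ∃ d ∈ D, ∃ w ∈ W, d + (fun _ => w) = g := by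
  simp only [supConst, AddSubgroup.mem_sup, AddSubgroup.mem_map, exists_exists_and_eq_and]
  rfl

lemma const_mem_supConst_iff (hD : D ≤ finiteSupport M) {c : M} :
    (fun _ : ℕ => c) ∈ supConst D W ↔ c ∈ W := by
  refine ⟨fun h => ?_, fun h => mem_supConst_iff.2 ⟨0, zero_mem _, c, h, zero_add _⟩⟩
  obtain ⟨d, hd, w, hw, hdw⟩ := mem_supConst_iff.1 h
  have hd_const : d = fun _ => c - w := by
    funext n
    exact eq_sub_of_add_eq (congrFun hdw n)
  have hcw : c - w = 0 := const_mem_finiteSupport_iff.1 (hd_const ▸ hD hd)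
  rwa [sub_eq_zero.1 hcw]

lemma supConst_inf_finiteSupport (hD : D ≤ finiteSupport M) :
    supConst D W ⊓ finiteSupport M = D := by
  refine le_antisymm (fun g hg => ?_) (le_inf le_sup_left hD)
  obtain ⟨hg, hgF⟩ := AddSubgroup.mem_inf.1 hg
  obtain ⟨d, hd, w, -, rfl⟩ := mem_supConst_iff.1 hg
  have hw : w = 0 := const_mem_finiteSupport_iff.1 (by simpa using sub_mem hgF (hD hd))
  rwa [hw, ← Pi.zero_def, add_zero]

lemma supConst_injective (hD : D ≤ finiteSupport M) : Injective (supConst D) := by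
  intro W W' h
  ext c
  rw [← const_mem_supConst_iff hD, h, const_mem_supConst_iff hD]

lemma not_controllable_of_eval_zero {H : AddSubgroup (ℕ → M)} {h : ℕ → M} (hH : h ∈ H)
    (h0 : ∀ g ∈ H ⊓ finiteSupport M, g 0 ≠ h 0) : ¬ Controllable H := by
  intro hc
  obtain ⟨g, hg, hgh⟩ := (hc {0} (finite_singleton 0)).subset (mem_image_of_mem _ hH)
  exact h0 g hg (congrFun hgh ⟨0, rfl⟩)

lemma not_controllable_supConst (hD : D ≤ finiteSupport M) {c : M} (hc : c ∈ W)
    (hcD : ∀ d ∈ D, d 0 ≠ c) : ¬ Controllable (supConst D W) :=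
  not_controllable_of_eval_zero ((const_mem_supConst_iff hD).2 hc)
    (by rwa [supConst_inf_finiteSupport hD])

variable [TopologicalSpace M]

lemma weaklyControllable_of_dense {H : AddSubgroup (ℕ → M)} (hDF : D ≤ finiteSupport M)
    (hDH : D ≤ H) (hD : Dense (D : Set (ℕ → M))) : WeaklyControllable H := by
  have hsub : (D : Set (ℕ → M)) ⊆ H ∩ {g | {n | g n ≠ 0}.Finite} := fun d hd => ⟨hDH hd, hDF hd⟩
  intro g _
  rw [(hD.mono hsub).closure_eq]
  trivial

/-- The truncations of `g` tend to `g`, and each lies in the closure of a product set. -/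
lemma dense_pi_inf_finiteSupport {Q : AddSubgroup M} (hQ : Dense (Q : Set M)) :
    Dense ((AddSubgroup.pi univ (fun _ => Q) ⊓ finiteSupport M : AddSubgroup (ℕ → M)) :
      Set (ℕ → M)) := by
  intro g
  set trunc : ℕ → ℕ → M := fun n k => if k < n then g k else 0
  have htrunc : ∀ n, trunc n ∈ closure (AddSubgroup.pi univ (fun _ => Q) ⊓ finiteSupport M :
      AddSubgroup (ℕ → M)) := by
    intro n
    set s : ℕ → Set M := fun k => if k < n then Q else {0}
    have hs : univ.pi s ⊆ (AddSubgroup.pi univ (fun _ => Q) ⊓ finiteSupport M :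
        AddSubgroup (ℕ → M)) := by
      intro f hf
      have hzero : ∀ k, n ≤ k → f k = 0 := fun k hk => by
        simpa [s, if_neg (not_lt.2 hk)] using hf k trivial
      refine AddSubgroup.mem_inf.2 ⟨fun k _ => ?_, (finite_Iio n).subset fun k hk => ?_⟩
      · by_cases hk : k < n
        · simpa [s, hk] using hf k trivial
        · rw [hzero k (not_lt.1 hk)]
          exact zero_mem Q
      · by_contra hkn
        exact hk (hzero k (not_lt.1 hkn))
    refine closure_mono hs ?_
    rw [closure_pi_set]
    intro k _
    by_cases hk : k < n
    · simp [s, trunc, hk, hQ.closure_eq]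
    · simpa [s, trunc, hk] using subset_closure (mem_singleton (0 : M))
  have htend : Tendsto trunc atTop (𝓝 g) := by
    rw [tendsto_pi_nhds]
    intro k
    refine tendsto_const_nhds.congr' ?_
    filter_upwards [eventually_gt_atTop k] with n hn
    simp [trunc, hn]
  simpa only [closure_closure] using mem_closure_of_tendsto htend (Eventually.of_forall htrunc)

end FiniteSupport

lemma Cardinal.mk_sdiff_singleton_of_aleph0_le {α : Type*} {s : Set α} (a : α) (hs : ℵ₀ ≤ #s) :
    #↥(s \ {a}) = #s := by
  by_cases ha : a ∈ s
  · refine eq_of_add_eq_of_aleph0_le ((add_comm _ _).trans (mk_sdiff_add_mk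
      (singleton_subset_iff.2 ha))) ?_ hs
    rw [mk_singleton]
    exact one_lt_aleph0.trans_le hs
  · rw [sdiff_singleton_eq_self ha]

lemma mk_addSubgroup_le {G : Type*} [AddGroup G] : #(AddSubgroup G) ≤ 2 ^ #G :=
  (mk_le_of_injective SetLike.coe_injective).trans_eq mk_set

section Circle

local notation "𝕋" => AddCircle (1 : ℝ)

def circleImage (P : Submodule ℚ ℝ) : AddSubgroup 𝕋 :=
  P.toAddSubgroup.map (QuotientAddGroup.mk' _)

lemma circleImage_le_circleImage_iff {P P' : Submodule ℚ ℝ} (hP : (1 : ℝ) ∈ P)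
    (hP' : (1 : ℝ) ∈ P') : circleImage P ≤ circleImage P' ↔ P ≤ P' := by
  rw [circleImage, circleImage, AddSubgroup.map_le_map_iff', QuotientAddGroup.ker_mk',
    sup_eq_left.2 (AddSubgroup.zmultiples_le.2 hP), sup_eq_left.2 (AddSubgroup.zmultiples_le.2 hP'),
    Submodule.toAddSubgroup_le]

def realHamelBasis : Set ℝ :=
  ((linearIndepOn_singleton_iff ℚ).2 one_ne_zero : LinearIndepOn ℚ id {(1 : ℝ)}).extend
    (subset_univ _)

lemma one_mem_realHamelBasis : (1 : ℝ) ∈ realHamelBasis :=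
  LinearIndepOn.subset_extend _ _ rfl

lemma linearIndepOn_realHamelBasis : LinearIndepOn ℚ id realHamelBasis :=
  LinearIndepOn.linearIndepOn_extend _ _

lemma mk_realHamelBasis : #realHamelBasis = 𝔠 :=
  (Module.Basis.extend _).mk_eq_rank''.trans Real.rank_rat_real

def circleSpan (S : Set ℝ) : AddSubgroup 𝕋 :=
  circleImage (Submodule.span ℚ (insert 1 S))

lemma circleSpan_le_circleSpan_iff {S S' : Set ℝ} (hS : S ⊆ realHamelBasis \ {1})
    (hS' : S' ⊆ realHamelBasis \ {1}) : circleSpan S ≤ circleSpan S' ↔ S ⊆ S' := by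
  have hB : ∀ {T : Set ℝ}, T ⊆ realHamelBasis \ {1} → insert 1 T ⊆ realHamelBasis :=
    fun hT => insert_subset one_mem_realHamelBasis (hT.trans sdiff_subset)
  rw [circleSpan, circleSpan, circleImage_le_circleImage_iff
    (Submodule.subset_span (mem_insert _ _)) (Submodule.subset_span (mem_insert _ _)),
    span_le_span_iff linearIndepOn_realHamelBasis (hB hS) (hB hS'),
    insert_subset_insert_iff fun h => (hS h).2 rfl]

lemma circleSpan_injOn : InjOn circleSpan (𝒫 (realHamelBasis \ {1})) := fun _ hS _ hS' h =>
  ((circleSpan_le_circleSpan_iff hS hS').1 h.le).antisymm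
    ((circleSpan_le_circleSpan_iff hS' hS).1 h.ge)

lemma not_circleSpan_le_circleSpan_empty {S : Set ℝ} (hS : S ⊆ realHamelBasis \ {1})
    (hne : S.Nonempty) : ¬ circleSpan S ≤ circleSpan ∅ := fun h =>
  hne.ne_empty (subset_empty_iff.1 ((circleSpan_le_circleSpan_iff hS (empty_subset _)).1 h))

lemma dense_circleSpan_empty : Dense (circleSpan ∅ : Set 𝕋) := by
  have hQ : Dense (Submodule.span ℚ {(1 : ℝ)} : Set ℝ) := by
    refine Rat.denseRange_cast.mono ?_
    rintro _ ⟨q, rfl⟩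
    exact Submodule.mem_span_singleton.2 ⟨q, by simp [Rat.smul_def]⟩
  rw [circleSpan, circleImage, AddSubgroup.coe_map, insert_empty_eq]
  exact (QuotientAddGroup.mk'_surjective _).denseRange.dense_image (AddCircle.continuous_mk' 1) hQ

lemma mk_addCircle : #𝕋 = 𝔠 := by
  rw [mk_congr (AddCircle.equivIco 1 0), mk_Ico_real (by norm_num)]

lemma mk_pi_nat_addCircle : #(ℕ → 𝕋) = 𝔠 := by
  rw [← power_def, mk_addCircle, mk_nat, continuum_power_aleph0]

-- `circleSpan ∅` is `ℚ/ℤ`.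
def finiteSupportRat : AddSubgroup (ℕ → 𝕋) :=
  AddSubgroup.pi univ (fun _ => circleSpan ∅) ⊓ finiteSupport 𝕋

def supConstSpan (S : Set ℝ) : AddSubgroup (ℕ → 𝕋) :=
  supConst finiteSupportRat (circleSpan S)

lemma weaklyControllable_supConstSpan (S : Set ℝ) : WeaklyControllable (supConstSpan S) :=
  weaklyControllable_of_dense inf_le_right le_sup_left
    (dense_pi_inf_finiteSupport dense_circleSpan_empty)

lemma not_controllable_supConstSpan {S : Set ℝ} (hS : S ⊆ realHamelBasis \ {1})
    (hne : S.Nonempty) : ¬ Controllable (supConstSpan S) := by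
  obtain ⟨c, hcS, hcQ⟩ := not_subset.1 (not_circleSpan_le_circleSpan_empty hS hne)
  exact not_controllable_supConst inf_le_right hcS
    fun d hd hdc => hcQ (hdc ▸ (AddSubgroup.mem_inf.1 hd).1 0 trivial)

lemma supConstSpan_injOn : InjOn supConstSpan (𝒫 (realHamelBasis \ {1})) :=
  (supConst_injective inf_le_right).comp_injOn circleSpan_injOn

lemma mk_realHamelBasis_sdiff_one : #↥(realHamelBasis \ {1}) = 𝔠 :=
  (mk_sdiff_singleton_of_aleph0_le 1 (mk_realHamelBasis ▸ aleph0_le_continuum)).trans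
    mk_realHamelBasis

end Circle

end

theorem card_weaklyControllable_not_controllable_circle :
    Cardinal.mk {H : AddSubgroup (ℕ → AddCircle (1 : ℝ)) |
        WeaklyControllable H ∧ ¬ Controllable H} =
      2 ^ Cardinal.continuum := by
  refine le_antisymm ((mk_set_le _).trans (mk_pi_nat_addCircle ▸ mk_addSubgroup_le)) ?_
  set E := realHamelBasis \ {1}
  have hP : #↥(𝒫 E) = 2 ^ 𝔠 := by rw [mk_powerset, mk_realHamelBasis_sdiff_one]
  calc 2 ^ 𝔠 = #↥(𝒫 E \ {∅}) :=
        ((mk_sdiff_singleton_of_aleph0_le ∅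
          (hP ▸ aleph0_le_continuum.trans (cantor 𝔠).le)).trans hP).symm
    _ = #↥(supConstSpan '' (𝒫 E \ {∅})) :=
        (mk_image_eq_of_injOn _ _ (supConstSpan_injOn.mono sdiff_subset)).symm
    _ ≤ _ := mk_le_mk_of_subset fun _ ⟨S, ⟨hSE, hS⟩, hH⟩ =>
        hH ▸ ⟨weaklyControllable_supConstSpan S,
          not_controllable_supConstSpan hSE (nonempty_iff_ne_empty.2 hS)⟩
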